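/- arXiv:2101.06033 — 3 statements merged into one kernel-verified Lean document; each statement's English description precedes it below -/
import Mathlib

section
/- Let q ≥ 3 and ℓ ≥ 2 be integers, and let π be a feasible permutation of Σ^ℓ over an alphabet Σ of size q. Then, assigning to each edge e of the De Bruijn graph G_{q,ℓ-1} (edges identified with Σ^ℓ) the weight π(e), no nonempty proper subset U ⊂ Σ^{ℓ-1} of the vertices exhibits a Dyck configuration. -/
open Finset

abbrev Wd (q ℓ : ℕ) := Fin ℓ → Fin q

def cyclicOcc {q n ℓ : ℕ} (s : Fin n → Fin q) (w : Wd q ℓ) : ℕ :=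
  (Finset.univ.filter fun i : Fin n =>
    ∀ j : Fin ℓ, s ⟨(i.1 + j.1) % n, Nat.mod_lt _ i.pos⟩ = w j).card

/-- `x` is the profile vector of order `ℓ` of some finite string over `Fin q`. -/
def IsFeasibleVec {q ℓ : ℕ} (x : Wd q ℓ → ℕ) : Prop :=
  ∃ (n : ℕ) (s : Fin n → Fin q), ∀ w, x w = cyclicOcc s w

/-- A permutation (ranking) of `Σ^ℓ` is feasible if some feasible vector `x` with pairwise
distinct entries ranks the `ℓ`-grams exactly as `π` does. -/
def FeasiblePerm {q ℓ : ℕ} (π : Wd q ℓ ≃ Fin (Fintype.card (Wd q ℓ))) : Prop :=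
  ∃ x : Wd q ℓ → ℕ, IsFeasibleVec x ∧ Function.Injective x ∧
    ∀ w w' : Wd q ℓ, π w < π w' ↔ x w < x w'

/-- source of the De Bruijn edge `w : Σ^ℓ` : its length-`(ℓ-1)` prefix. -/
def dbSrc {q ℓ : ℕ} (w : Wd q ℓ) : Wd q (ℓ - 1) :=
  fun i => w ⟨i.1, by have := i.isLt; omega⟩

/-- destination of the De Bruijn edge `w : Σ^ℓ` : its length-`(ℓ-1)` suffix. -/
def dbDst {q ℓ : ℕ} (w : Wd q ℓ) : Wd q (ℓ - 1) :=
  fun i => w ⟨i.1 + 1, by have := i.isLt; omega⟩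

/-- `Ein` and `Eout` "exhibit a Dyck configuration": both have the same size `k`, the
weights of edges in `Ein ∪ Eout` are pairwise distinct, and, sorting both sides by
increasing weight, either every in-edge weight is smaller than the corresponding out-edge
weight, or vice versa. -/
def ExhibitsDyck {E W : Type*} [DecidableEq E] [DecidableEq W] [LinearOrder W]
    (Ein Eout : Finset E) (wt : E → W) : Prop :=
  ∃ (k : ℕ) (hin : (Ein.image wt).card = k) (hout : (Eout.image wt).card = k),
    Ein.card = k ∧ Eout.card = k ∧ ((Ein ∪ Eout).image wt).card = 2 * k ∧
    ((∀ i : Fin k, ((Ein.image wt).orderIsoOfFin hin i).1 <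
        ((Eout.image wt).orderIsoOfFin hout i).1) ∨
     (∀ i : Fin k, ((Eout.image wt).orderIsoOfFin hout i).1 <
        ((Ein.image wt).orderIsoOfFin hin i).1))

lemma step_exists (Q : ℕ → Prop) : ∀ r : ℕ, ¬ Q 0 → Q r → ∃ t, ¬ Q t ∧ Q (t + 1) := by
  intro r
  induction r with
  | zero => intro h hq; exact absurd hq h
  | succ m ih =>
    intro h0 hq
    by_cases hm : Q m
    · exact ih h0 hm
    · exact ⟨m, hm, hq⟩

def pw (q r : ℕ) (hr : 0 < r) (u v : Wd q r) (m : ℕ) : Fin q :=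
  if h : m < r then u ⟨m, h⟩ else v ⟨(m - r) % r, Nat.mod_lt _ hr⟩

lemma debruijn_edge {q ℓ : ℕ} (hℓ : 2 ≤ ℓ) (U : Finset (Wd q (ℓ - 1)))
    (u v : Wd q (ℓ - 1)) (hu : u ∉ U) (hv : v ∈ U) :
    ∃ w : Wd q ℓ, dbDst w ∈ U ∧ dbSrc w ∉ U := by
  have hr : 0 < ℓ - 1 := by omega
  have h0 : (fun i : Fin (ℓ - 1) => pw q (ℓ - 1) hr u v (0 + i.1)) = u := by
    funext i
    have hi : 0 + i.1 < ℓ - 1 := by have := i.isLt; omega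
    simp only [pw, hi, dif_pos]
    congr 1
    apply Fin.ext
    simp
  have h1 : (fun i : Fin (ℓ - 1) => pw q (ℓ - 1) hr u v ((ℓ - 1) + i.1)) = v := by
    funext i
    have hi : ¬ ((ℓ - 1) + i.1 < ℓ - 1) := by omega
    simp only [pw, hi, dif_neg, not_false_iff]
    congr 1
    apply Fin.ext
    show ((ℓ - 1) + i.1 - (ℓ - 1)) % (ℓ - 1) = i.1
    rw [Nat.add_sub_cancel_left, Nat.mod_eq_of_lt i.isLt]
  obtain ⟨t, ht1, ht2⟩ := step_exists
    (fun t => (fun i : Fin (ℓ - 1) => pw q (ℓ - 1) hr u v (t + i.1)) ∈ U) (ℓ - 1)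
    (by show ¬ _ ∈ U; rw [h0]; exact hu) (by show _ ∈ U; rw [h1]; exact hv)
  refine ⟨fun j : Fin ℓ => pw q (ℓ - 1) hr u v (t + j.1), ?_, ?_⟩
  · have : dbDst (fun j : Fin ℓ => pw q (ℓ - 1) hr u v (t + j.1))
        = fun i : Fin (ℓ - 1) => pw q (ℓ - 1) hr u v ((t + 1) + i.1) := by
      funext i
      show pw q (ℓ - 1) hr u v (t + (i.1 + 1)) = pw q (ℓ - 1) hr u v ((t + 1) + i.1)
      congr 1
      omega
    rw [this]
    exact ht2
  · exact ht1

/-- if `π` is a feasible permutation of `Σ^ℓ` (`q ≥ 3`, `ℓ ≥ 2`), then, with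
edge weights `π(e)` on the De Bruijn graph `G_{q,ℓ-1}`, no nonempty proper subset `U` of
the vertices exhibits a Dyck configuration. -/
theorem stmt_14 (q ℓ : ℕ) (hq : 3 ≤ q) (hℓ : 2 ≤ ℓ)
    (π : Wd q ℓ ≃ Fin (Fintype.card (Wd q ℓ))) (hπ : FeasiblePerm π)
    (U : Finset (Wd q (ℓ - 1))) (hU1 : U.Nonempty) (hU2 : U ≠ Finset.univ) :
    ¬ ExhibitsDyck
        (Finset.univ.filter fun w : Wd q ℓ => dbDst w ∈ U ∧ dbSrc w ∉ U)
        (Finset.univ.filter fun w : Wd q ℓ => dbSrc w ∈ U ∧ dbDst w ∉ U)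
        (fun w => (π w : ℕ)) := by
  intro hDyck
  obtain ⟨x, ⟨n, s, hx⟩, hinj, hord⟩ := hπ
  set wt : Wd q ℓ → ℕ := fun w => (π w : ℕ) with hwt
  have hwtinj : Function.Injective wt := fun a b h => π.injective (Fin.val_injective h)
  set Ein : Finset (Wd q ℓ) :=
    Finset.univ.filter fun w : Wd q ℓ => dbDst w ∈ U ∧ dbSrc w ∉ U with hEinDef
  set Eout : Finset (Wd q ℓ) :=
    Finset.univ.filter fun w : Wd q ℓ => dbSrc w ∈ U ∧ dbDst w ∉ U with hEoutDef
  obtain ⟨k, hA, hB, hEinC, hEoutC, hUC, hD⟩ := hDyck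
  -- the cyclic word viewed as a family of ℓ-grams
  set G : Fin n → Wd q ℓ :=
    (fun i j => s ⟨(i.1 + j.1) % n, Nat.mod_lt _ i.pos⟩) with hG
  have hxG : ∀ w, x w = (Finset.univ.filter fun i => G i = w).card := by
    intro w
    rw [hx, cyclicOcc]
    congr 1
    apply Finset.filter_congr
    intro i _
    simp only [hG, funext_iff]
  have hsum : ∀ (pred : Wd q ℓ → Prop) [DecidablePred pred],
      ∑ w ∈ Finset.univ.filter pred, x w
        = (Finset.univ.filter fun i => pred (G i)).card := by
    intro pred _
    rw [Finset.card_eq_sum_card_fiberwise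
      (f := G) (s := Finset.univ.filter fun i => pred (G i)) (t := Finset.univ.filter pred)
      (fun i hi => by simp only [Finset.mem_coe, Finset.mem_filter, Finset.mem_univ, true_and] at hi ⊢; exact hi)]
    apply Finset.sum_congr rfl
    intro w hw
    rw [hxG]
    congr 1
    ext i
    simp only [Finset.mem_filter, Finset.mem_univ, true_and] at hw ⊢
    constructor
    · intro h; exact ⟨by rw [h]; exact hw, h⟩
    · exact fun h => h.2
  -- flow conservation across U
  have hshift : ∀ i : Fin n, dbDst (G i) = dbSrc (G ⟨(i.1 + 1) % n, Nat.mod_lt _ i.pos⟩) := by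
    intro i
    funext j
    show s _ = s _
    congr 1
    apply Fin.ext
    show (i.1 + (j.1 + 1)) % n = ((i.1 + 1) % n + j.1) % n
    rw [Nat.mod_add_mod]
    congr 1
    omega
  have hcard : (Finset.univ.filter fun i : Fin n => dbDst (G i) ∈ U).card
      = (Finset.univ.filter fun i : Fin n => dbSrc (G i) ∈ U).card := by
    apply Finset.card_bij'
      (i := fun i _ => (⟨(i.1 + 1) % n, Nat.mod_lt _ i.pos⟩ : Fin n))
      (j := fun i _ => (⟨(i.1 + (n - 1)) % n, Nat.mod_lt _ i.pos⟩ : Fin n))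
    · intro a ha
      simp only [Finset.mem_filter, Finset.mem_univ, true_and] at ha ⊢
      rw [← hshift a]; exact ha
    · intro a ha
      simp only [Finset.mem_filter, Finset.mem_univ, true_and] at ha ⊢
      rw [hshift]
      have hpos := a.pos
      have : ((a.1 + (n - 1)) % n + 1) % n = a.1 := by
        rw [Nat.mod_add_mod]
        have : a.1 + (n - 1) + 1 = a.1 + n := by omega
        rw [this, Nat.add_mod_right, Nat.mod_eq_of_lt a.isLt]
      convert ha using 3
      exact Fin.ext this
    · intro a _
      apply Fin.ext
      show ((a.1 + 1) % n + (n - 1)) % n = a.1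
      rw [Nat.mod_add_mod]
      have hpos := a.pos
      have : a.1 + 1 + (n - 1) = a.1 + n := by omega
      rw [this, Nat.add_mod_right, Nat.mod_eq_of_lt a.isLt]
    · intro a _
      apply Fin.ext
      show ((a.1 + (n - 1)) % n + 1) % n = a.1
      rw [Nat.mod_add_mod]
      have hpos := a.pos
      have : a.1 + (n - 1) + 1 = a.1 + n := by omega
      rw [this, Nat.add_mod_right, Nat.mod_eq_of_lt a.isLt]
  have hDstSrc : ∑ w ∈ Finset.univ.filter (fun w : Wd q ℓ => dbDst w ∈ U), x w
      = ∑ w ∈ Finset.univ.filter (fun w : Wd q ℓ => dbSrc w ∈ U), x w := by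
    rw [hsum, hsum, hcard]
  have hsplit1 : ∑ w ∈ Finset.univ.filter (fun w : Wd q ℓ => dbDst w ∈ U), x w
      = ∑ w ∈ Finset.univ.filter (fun w : Wd q ℓ => dbDst w ∈ U ∧ dbSrc w ∈ U), x w
        + ∑ w ∈ Ein, x w := by
    rw [← Finset.sum_filter_add_sum_filter_not
      (Finset.univ.filter fun w : Wd q ℓ => dbDst w ∈ U) (fun w => dbSrc w ∈ U)]
    congr 1 <;> · rw [Finset.filter_filter]
  have hsplit2 : ∑ w ∈ Finset.univ.filter (fun w : Wd q ℓ => dbSrc w ∈ U), x w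
      = ∑ w ∈ Finset.univ.filter (fun w : Wd q ℓ => dbDst w ∈ U ∧ dbSrc w ∈ U), x w
        + ∑ w ∈ Eout, x w := by
    rw [← Finset.sum_filter_add_sum_filter_not
      (Finset.univ.filter fun w : Wd q ℓ => dbSrc w ∈ U) (fun w => dbDst w ∈ U)]
    congr 1
    · rw [Finset.filter_filter]
      apply Finset.sum_congr ?_ (fun _ _ => rfl)
      ext w
      simp only [Finset.mem_filter]
      tauto
    · rw [Finset.filter_filter]
  have hcons : ∑ w ∈ Ein, x w = ∑ w ∈ Eout, x w := by
    have h := hDstSrc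
    rw [hsplit1, hsplit2] at h
    omega
  -- Ein is nonempty (strong connectivity of the De Bruijn graph)
  have hr : 0 < ℓ - 1 := by omega
  obtain ⟨v, hv⟩ := hU1
  obtain ⟨u, hu⟩ : ∃ u, u ∉ U := by
    by_contra h
    push_neg at h
    exact hU2 (Finset.eq_univ_iff_forall.mpr h)
  have hEinNe : Ein.Nonempty := by
    obtain ⟨w0, hw1, hw2⟩ := debruijn_edge hℓ U u v hu hv
    refine ⟨w0, ?_⟩
    rw [hEinDef, Finset.mem_filter]
    exact ⟨Finset.mem_univ _, hw1, hw2⟩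
  have hk : 0 < k := by
    rw [← hEinC]
    exact Finset.card_pos.mpr hEinNe
  -- strict sum comparison from the Dyck configuration
  haveI : Nonempty (Fin q) := ⟨⟨0, by omega⟩⟩
  have hX : ∀ e : Wd q ℓ, (x ∘ Function.invFun wt) (wt e) = x e := by
    intro e
    exact congrArg x (Function.leftInverse_invFun hwtinj e)
  have key : ∀ (S T : Finset (Wd q ℓ)) (hS : (S.image wt).card = k) (hT : (T.image wt).card = k),
      (∀ i : Fin k, (((S.image wt).orderIsoOfFin hS i) : ℕ) < (((T.image wt).orderIsoOfFin hT i) : ℕ)) →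
      ∑ e ∈ S, x e < ∑ e ∈ T, x e := by
    intro S T hS hT hlt
    set X : ℕ → ℕ := x ∘ Function.invFun wt with hXdef
    have himg : ∀ (A : Finset (Wd q ℓ)) (hAc : (A.image wt).card = k),
        ∑ e ∈ A, x e = ∑ i : Fin k, X (((A.image wt).orderIsoOfFin hAc i) : ℕ) := by
      intro A hAc
      have h1 : ∑ e ∈ A, x e = ∑ a ∈ A.image wt, X a := by
        rw [Finset.sum_image (fun a _ b _ h => hwtinj h)]
        exact Finset.sum_congr rfl (fun e _ => (hX e).symm)
      rw [h1, ← Finset.sum_attach (A.image wt) X]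
      exact (Fintype.sum_equiv ((A.image wt).orderIsoOfFin hAc).toEquiv _ _
        (fun i => rfl)).symm
    rw [himg S hS, himg T hT]
    haveI : Nonempty (Fin k) := ⟨⟨0, hk⟩⟩
    apply Finset.sum_lt_sum_of_nonempty Finset.univ_nonempty
    intro i _
    obtain ⟨e, he, hwe⟩ := Finset.mem_image.mp ((S.image wt).orderIsoOfFin hS i).2
    obtain ⟨e', he', hwe'⟩ := Finset.mem_image.mp ((T.image wt).orderIsoOfFin hT i).2
    rw [← hwe, ← hwe']
    rw [hX e, hX e']
    apply (hord e e').mp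
    have hlt' := hlt i
    rw [← hwe, ← hwe'] at hlt'
    exact hlt'
  rcases hD with h | h
  · have := key Ein Eout hA hB h
    omega
  · have := key Eout Ein hB hA h
    omega
end

section
/- Let G = (V,E) be a finite directed graph with real edge weights and let v ∈ V. Suppose v is in an over state and e* is a step-down edge for v, or v is in an under state and e* is a step-up edge for v. Define c = |wt(E_in(v)) - wt(E_out(v))| / ||E_{≥e*} ∩ E_in(v)| - |E_{≥e*} ∩ E_out(v)|| and new weights wt'(e) = wt(e) + c for e ∈ E_{≥e*} and wt'(e) = wt(e) otherwise. Then for all edges e, e' ∈ E, wt(e) < wt(e') implies wt'(e) < wt'(e') (the relative order of edges by weight is preserved), and v is balanced under wt' (the total wt'-weight of edges entering v equals that of edges leaving v). -/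
open Finset

/-- let `v` be a vertex of a finite weighted directed graph.  If `v` is in an
over state and `e*` is a step-down edge for `v`, or `v` is in an under state and `e*` is a
step-up edge for `v`, then adding
`c = |wt(E_in(v)) - wt(E_out(v))| / ||E_{≥e*} ∩ E_in(v)| - |E_{≥e*} ∩ E_out(v)||`
to the weight of every edge of `E_{≥e*} = {e : wt e ≥ wt e*}` preserves the relative order
of all edges by weight and makes `v` balanced. -/
theorem stmt_15 {V E : Type*} [Fintype E] [DecidableEq V] [DecidableEq E]
    (src dst : E → V) (wt : E → ℝ) (v : V) (estar : E)
    -- `v` over (in-weight < out-weight) and `e*` step-down, or `v` under and `e*` step-up: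
    (h : (∑ e ∈ Finset.univ.filter (fun e => dst e = v), wt e <
            ∑ e ∈ Finset.univ.filter (fun e => src e = v), wt e ∧
          ((Finset.univ.filter fun e => wt estar ≤ wt e) ∩
              (Finset.univ.filter fun e => src e = v)).card <
            ((Finset.univ.filter fun e => wt estar ≤ wt e) ∩
              (Finset.univ.filter fun e => dst e = v)).card) ∨
         (∑ e ∈ Finset.univ.filter (fun e => src e = v), wt e <
            ∑ e ∈ Finset.univ.filter (fun e => dst e = v), wt e ∧
          ((Finset.univ.filter fun e => wt estar ≤ wt e) ∩
              (Finset.univ.filter fun e => dst e = v)).card <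
            ((Finset.univ.filter fun e => wt estar ≤ wt e) ∩
              (Finset.univ.filter fun e => src e = v)).card))
    (c : ℝ)
    (hc : c = |(∑ e ∈ Finset.univ.filter (fun e => dst e = v), wt e) -
                ∑ e ∈ Finset.univ.filter (fun e => src e = v), wt e| /
          |(((Finset.univ.filter fun e => wt estar ≤ wt e) ∩
              (Finset.univ.filter fun e => dst e = v)).card : ℝ) -
            (((Finset.univ.filter fun e => wt estar ≤ wt e) ∩
              (Finset.univ.filter fun e => src e = v)).card : ℝ)|)
    (wt' : E → ℝ)
    (hwt' : ∀ e, wt' e = if wt estar ≤ wt e then wt e + c else wt e) :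
    (∀ e e' : E, wt e < wt e' → wt' e < wt' e') ∧
      ∑ e ∈ Finset.univ.filter (fun e => dst e = v), wt' e =
        ∑ e ∈ Finset.univ.filter (fun e => src e = v), wt' e := by

  -- abbreviations
  set Sin := ∑ e ∈ Finset.univ.filter (fun e => dst e = v), wt e with hSin
  set Sout := ∑ e ∈ Finset.univ.filter (fun e => src e = v), wt e with hSout
  set A := ((Finset.univ.filter fun e => wt estar ≤ wt e) ∩
              (Finset.univ.filter fun e => dst e = v)).card with hA
  set B := ((Finset.univ.filter fun e => wt estar ≤ wt e) ∩
              (Finset.univ.filter fun e => src e = v)).card with hB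
  have hc0 : 0 ≤ c := by
    rw [hc]; exact div_nonneg (abs_nonneg _) (abs_nonneg _)
  have key : ∀ T : Finset E, ∑ e ∈ T, wt' e =
      (∑ e ∈ T, wt e) + c * ((Finset.univ.filter fun e => wt estar ≤ wt e) ∩ T).card := by
    intro T
    have h1 : (Finset.univ.filter fun e => wt estar ≤ wt e) ∩ T
        = T.filter (fun e => wt estar ≤ wt e) := by
      ext e; simp [and_comm]
    rw [h1]
    have : ∀ e ∈ T, wt' e = wt e + (if wt estar ≤ wt e then c else 0) := by
      intro e _
      rw [hwt']; split <;> simp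
    rw [Finset.sum_congr rfl this, Finset.sum_add_distrib, ← Finset.sum_filter,
      Finset.sum_const, nsmul_eq_mul]
    ring
  constructor
  · intro e e' hlt
    rw [hwt', hwt']
    split <;> split
    · linarith
    · rename_i h1 h2; exact absurd (le_trans h1 hlt.le) h2
    · linarith
    · linarith
  · rw [key, key, ← hA, ← hB]
    rcases h with ⟨hs, hn⟩ | ⟨hs, hn⟩
    · have hn' : (B : ℝ) < A := by exact_mod_cast hn
      have hcv : c = (Sout - Sin) / ((A : ℝ) - B) := by
        rw [hc, abs_of_neg (by linarith : Sin - Sout < 0),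
          abs_of_pos (by linarith : (A : ℝ) - B > 0)]
        ring_nf
      have hceq : c * ((A : ℝ) - B) = Sout - Sin := by
        rw [hcv]; exact div_mul_cancel₀ _ (sub_ne_zero.mpr hn'.ne')
      ring_nf at hceq ⊢
      linarith [hceq]
    · have hn' : (A : ℝ) < B := by exact_mod_cast hn
      have hcv : c = (Sin - Sout) / ((B : ℝ) - A) := by
        rw [hc, abs_of_pos (by linarith : Sin - Sout > 0),
          abs_of_neg (by linarith : (A : ℝ) - B < 0)]
        ring_nf
      have hceq : c * ((B : ℝ) - A) = Sin - Sout := by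
        rw [hcv]; exact div_mul_cancel₀ _ (sub_ne_zero.mpr hn'.ne')
      ring_nf at hceq ⊢
      linarith [hceq]
end

section
/- Let q ≥ 3 and ℓ ≥ 2 be integers, let G_{q,ℓ-1} = (V,E) be the De Bruijn graph over an alphabet Σ of size q, let π be a permutation of E, and assign weights wt(e) = π(e) + 1 for all e ∈ E. Suppose the vertices can be indexed V = {v_0, …, v_{q^{ℓ-1}-1}} so that for each i ∈ {0, …, q^{ℓ-1}-2}: (1) the singleton {v_i} does not exhibit a Dyck configuration, and (2) v_i has a step-up edge e ∈ E and a step-down edge e' ∈ E such that both e and e' are stable edges for every v_j with j < i. Then π is feasible, i.e., π ∈ Φ_{q,ℓ}. -/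
open Finset

/-- `E_{≥e*}` : the edges whose weight is at least `wt e*`. -/
def geEdges {q ℓ : ℕ} (wt : Wd q ℓ → ℕ) (estar : Wd q ℓ) : Finset (Wd q ℓ) :=
  Finset.univ.filter fun w => wt estar ≤ wt w

/-- `E_in(v)` : all edges entering the vertex `v` (self-loops included). -/
def inEdges (q ℓ : ℕ) (v : Wd q (ℓ - 1)) : Finset (Wd q ℓ) :=
  Finset.univ.filter fun w => dbDst w = v

/-- `E_out(v)` : all edges leaving the vertex `v` (self-loops included). -/
def outEdges (q ℓ : ℕ) (v : Wd q (ℓ - 1)) : Finset (Wd q ℓ) :=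
  Finset.univ.filter fun w => dbSrc w = v

/-- `e*` is a step-up edge for `v` : `|E_{≥e*} ∩ E_in(v)| < |E_{≥e*} ∩ E_out(v)|`. -/
def IsStepUp {q ℓ : ℕ} (wt : Wd q ℓ → ℕ) (estar : Wd q ℓ) (v : Wd q (ℓ - 1)) : Prop :=
  (geEdges wt estar ∩ inEdges q ℓ v).card < (geEdges wt estar ∩ outEdges q ℓ v).card

/-- `e*` is a step-down edge for `v` : `|E_{≥e*} ∩ E_in(v)| > |E_{≥e*} ∩ E_out(v)|`. -/
def IsStepDown {q ℓ : ℕ} (wt : Wd q ℓ → ℕ) (estar : Wd q ℓ) (v : Wd q (ℓ - 1)) : Prop :=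
  (geEdges wt estar ∩ outEdges q ℓ v).card < (geEdges wt estar ∩ inEdges q ℓ v).card

/-- `e*` is a stable edge for `v` : `|E_{≥e*} ∩ E_in(v)| = |E_{≥e*} ∩ E_out(v)|`. -/
def IsStable {q ℓ : ℕ} (wt : Wd q ℓ → ℕ) (estar : Wd q ℓ) (v : Wd q (ℓ - 1)) : Prop :=
  (geEdges wt estar ∩ inEdges q ℓ v).card = (geEdges wt estar ∩ outEdges q ℓ v).card

namespace Stmt18

variable {q ℓ : ℕ}

/-- consecutive-overlap relation between De Bruijn edges -/
def dstep {q ℓ : ℕ} (e f : Wd q ℓ) : Prop := dbDst e = dbSrc f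

/-- circuit based at `a` (chain form, empty list allowed) -/
def CircAt (a : Wd q (ℓ-1)) (L : List (Wd q ℓ)) : Prop :=
  L.Chain' dstep ∧ (∀ e ∈ L.head?, dbSrc e = a) ∧ (∀ e ∈ L.getLast?, dbDst e = a)

/-- circuit, cyclic index form -/
def CircIdx (L : List (Wd q ℓ)) : Prop :=
  ∀ (i : ℕ) (h : i < L.length),
    dbDst (L.get ⟨i, h⟩) =
      dbSrc (L.get ⟨(i+1) % L.length, Nat.mod_lt _ (Nat.zero_lt_of_lt h)⟩)

lemma circAt_append {a : Wd q (ℓ-1)} {L M : List (Wd q ℓ)}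
    (hL : CircAt a L) (hM : CircAt a M) : CircAt a (L ++ M) := by
  obtain ⟨hc1, hh1, hl1⟩ := hL
  obtain ⟨hc2, hh2, hl2⟩ := hM
  refine ⟨hc1.append hc2 ?_, ?_, ?_⟩
  · intro x hx y hy
    have := hl1 x hx
    have := hh2 y hy
    simp [dstep, *]
  · intro e he
    rcases eq_or_ne L [] with rfl | hne
    · exact hh2 e (by simpa using he)
    · rw [List.head?_append_of_ne_nil _ hne] at he
      exact hh1 e he
  · intro e he
    rcases eq_or_ne M [] with rfl | hne
    · exact hl1 e (by simpa using he)
    · rw [List.getLast?_append_of_ne_nil _ hne] at he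
      exact hl2 e he


lemma get_congr {α : Type*} (L : List α) {i j : ℕ} (hi : i < L.length)
    (hj : j < L.length) (h : i = j) : L.get ⟨i, hi⟩ = L.get ⟨j, hj⟩ := by
  subst h; rfl

lemma head?_eq_get {α : Type*} (L : List α) (h : 0 < L.length) :
    L.head? = some (L.get ⟨0, h⟩) := by
  cases L with
  | nil => simp at h
  | cons a t => simp

lemma getLast?_eq_get {α : Type*} (L : List α) (h : 0 < L.length) :
    L.getLast? = some (L.get ⟨L.length - 1, by omega⟩) := by
  rw [List.getLast?_eq_getLast (by intro hh; subst hh; simp at h),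
    List.getLast_eq_getElem, List.get_eq_getElem]

lemma circIdx_of_circAt {a : Wd q (ℓ-1)} {L : List (Wd q ℓ)}
    (hL : CircAt a L) (hne : L ≠ []) : CircIdx L := by
  obtain ⟨hc, hh, hl⟩ := hL
  have hpos : 0 < L.length := List.length_pos_iff.2 hne
  intro i h
  rcases lt_or_ge (i+1) L.length with h1 | h1
  · have := List.isChain_iff_getElem.1 hc i (by omega)
    rw [get_congr L _ _ (Nat.mod_eq_of_lt h1)]
    exact this
  · have : i = L.length - 1 := by omega
    subst this
    have h2 : (L.length - 1 + 1) % L.length = 0 := by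
      have : L.length - 1 + 1 = L.length := by omega
      rw [this, Nat.mod_self]
    have e1 := hl _ (getLast?_eq_get L hpos)
    have e2 := hh _ (head?_eq_get L hpos)
    simp only [h2]
    rw [e1, e2]

lemma circAt_of_circIdx {L : List (Wd q ℓ)} (hL : CircIdx L) (h : 0 < L.length) :
    CircAt (dbSrc (L.get ⟨0, h⟩)) L := by
  refine ⟨?_, ?_, ?_⟩
  · rw [List.Chain', List.isChain_iff_getElem]
    intro i hi
    have := hL i (by omega)
    rw [get_congr L (Nat.mod_lt _ (by omega)) (by omega) (Nat.mod_eq_of_lt (by omega))] at this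
    exact this
  · intro e he
    rw [head?_eq_get L h] at he
    simp at he
    subst he; rfl
  · intro e he
    rw [getLast?_eq_get L h] at he
    simp at he
    subst he
    have := hL (L.length - 1) (by omega)
    have h2 : (L.length - 1 + 1) % L.length = 0 := by
      have : L.length - 1 + 1 = L.length := by omega
      rw [this, Nat.mod_self]
    simpa [h2] using this

lemma circIdx_rotate {L : List (Wd q ℓ)} (hL : CircIdx L) (k : ℕ) :
    CircIdx (L.rotate k) := by
  intro i h
  have hlen : (L.rotate k).length = L.length := L.length_rotate k
  have hpos : 0 < L.length := by omega
  have g1 : ∀ (j : ℕ) (hj : j < (L.rotate k).length),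
      (L.rotate k).get ⟨j, hj⟩ = L.get ⟨(j + k) % L.length, Nat.mod_lt _ hpos⟩ := by
    intro j hj
    simp only [List.get_eq_getElem]
    rw [List.getElem_rotate]
  rw [g1, g1]
  have := hL ((i + k) % L.length) (Nat.mod_lt _ hpos)
  rw [this]
  exact congrArg dbSrc (get_congr L _ _ (by
    rw [hlen, Nat.mod_add_mod, Nat.mod_add_mod]
    exact congrArg (· % L.length) (by omega)))

end Stmt18
namespace Stmt18

variable {q ℓ : ℕ}

lemma cnt_count {α : Type*} [DecidableEq α] (L : List α) (w : α) :
    L.count w = ∑ i : Fin L.length, if L.get i = w then 1 else 0 := by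
  induction L with
  | nil => simp
  | cons a t ih =>
    show List.count w (a :: t) = ∑ i : Fin (t.length+1), if (a :: t).get i = w then 1 else 0
    rw [Fin.sum_univ_succ, List.count_cons]
    have h2 : ∀ i : Fin t.length, (a::t).get i.succ = t.get i := fun i => List.get_cons_succ
    simp only [h2, List.get_cons_zero, ← ih]
    have h3 : (if (a == w) = true then 1 else 0) = (if a = w then 1 else 0) := by
      by_cases h : a = w <;> simp [h]
    rw [h3]
    rw [ih]; exact add_comm _ _

lemma sum_count_filter {α : Type*} [Fintype α] [DecidableEq α] (p : α → Prop)
    [DecidablePred p] (L : List α) :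
    ∑ e ∈ Finset.univ.filter p, L.count e =
      ∑ i : Fin L.length, if p (L.get i) then 1 else 0 := by
  simp only [cnt_count]
  rw [Finset.sum_comm]
  refine Finset.sum_congr rfl fun i _ => ?_
  rw [Finset.sum_ite_eq (Finset.univ.filter p) (L.get i) (fun _ => 1)]
  simp

lemma sum_count_univ {α : Type*} [Fintype α] [DecidableEq α] (L : List α) :
    ∑ e : α, L.count e = L.length := by
  have := sum_count_filter (fun _ => True) L
  simpa using this

def rotEquiv (n : ℕ) (h : 0 < n) : Fin n ≃ Fin n where
  toFun i := ⟨(i.1 + 1) % n, Nat.mod_lt _ h⟩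
  invFun i := ⟨(i.1 + (n-1)) % n, Nat.mod_lt _ h⟩
  left_inv i := by
    apply Fin.ext
    simp only [Nat.mod_add_mod]
    have : i.1 + 1 + (n - 1) = i.1 + n := by omega
    rw [this, Nat.add_mod_right, Nat.mod_eq_of_lt i.isLt]
  right_inv i := by
    apply Fin.ext
    simp only [Nat.mod_add_mod]
    have : i.1 + (n - 1) + 1 = i.1 + n := by omega
    rw [this, Nat.add_mod_right, Nat.mod_eq_of_lt i.isLt]

/-- the edge-count vector of a circuit is balanced -/
lemma circ_balanced {L : List (Wd q ℓ)} (hL : CircIdx L) (u : Wd q (ℓ-1)) :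
    ∑ e ∈ inEdges q ℓ u, L.count e = ∑ e ∈ outEdges q ℓ u, L.count e := by
  rcases Nat.eq_zero_or_pos L.length with h0 | hpos
  · have : L = [] := List.length_eq_zero_iff.1 h0
    subst this; simp
  rw [inEdges, outEdges, sum_count_filter, sum_count_filter]
  rw [Fintype.sum_equiv (rotEquiv L.length hpos)
    (fun i => if dbDst (L.get i) = u then 1 else 0)
    (fun i => if dbSrc (L.get i) = u then 1 else 0)]
  intro i
  congr 1
  rw [hL i.1 i.isLt]
  rfl

/-- main gram-counting lemma -/
lemma gram_count (hℓ : 2 ≤ ℓ) (L : List (Wd q ℓ)) (hL : CircIdx L)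
    (h : 0 < L.length) (w : Wd q ℓ) :
    cyclicOcc (fun i : Fin L.length => L.get i ⟨0, by omega⟩) w = L.count w := by
  have key : ∀ (j : ℕ) (hj : j < ℓ) (i : ℕ) (hi : i < L.length),
      L.get ⟨(i + j) % L.length, Nat.mod_lt _ h⟩ ⟨0, by omega⟩ =
      L.get ⟨i, hi⟩ ⟨j, hj⟩ := by
    intro j
    induction j with
    | zero =>
      intro hj i hi
      rw [get_congr L _ hi (by rw [Nat.add_zero, Nat.mod_eq_of_lt hi])]
    | succ j ih =>
      intro hj i hi
      have hstep := hL i hi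
      have h1 : L.get ⟨i, hi⟩ ⟨j+1, hj⟩ =
          L.get ⟨(i+1) % L.length, Nat.mod_lt _ h⟩ ⟨j, by omega⟩ := by
        have := congrFun hstep ⟨j, by omega⟩
        simp only [dbDst, dbSrc] at this
        convert this using 2
      rw [h1, ← ih (by omega) ((i+1) % L.length) (Nat.mod_lt _ h)]
      have hidx : (i + (j+1)) % L.length = ((i+1) % L.length + j) % L.length := by
        rw [Nat.mod_add_mod]
        exact congrArg (· % L.length) (by omega)
      rw [get_congr L _ (Nat.mod_lt _ h) hidx]
  rw [cyclicOcc]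
  have hpred : ∀ i : Fin L.length,
      (∀ j : Fin ℓ, L.get ⟨(i.1 + j.1) % L.length, Nat.mod_lt _ i.pos⟩ ⟨0, by omega⟩ = w j)
        ↔ L.get i = w := by
    intro i
    constructor
    · intro hj
      funext j
      rw [← hj j, key j.1 j.isLt i.1 i.isLt]
    · intro he j
      rw [key j.1 j.isLt i.1 i.isLt, he]
  rw [Finset.filter_congr (fun i _ => hpred i)]
  rw [Finset.card_filter, cnt_count]

end Stmt18
namespace Stmt18

variable {q ℓ : ℕ}

def inS (y : Wd q ℓ → ℕ) (v : Wd q (ℓ-1)) : ℕ := ∑ e ∈ inEdges q ℓ v, y e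
def outS (y : Wd q ℓ → ℕ) (v : Wd q (ℓ-1)) : ℕ := ∑ e ∈ outEdges q ℓ v, y e

lemma sum_update_sub {α : Type*} [Fintype α] [DecidableEq α] (y : α → ℕ) (e₀ : α)
    (h1 : 1 ≤ y e₀) (s : Finset α) :
    (∑ e ∈ s, Function.update y e₀ (y e₀ - 1) e) + (if e₀ ∈ s then 1 else 0)
      = ∑ e ∈ s, y e := by
  by_cases hm : e₀ ∈ s
  · rw [Finset.sum_update_of_mem hm, if_pos hm,
      Finset.sum_eq_sum_sdiff_singleton_add hm y]
    omega
  · rw [Finset.sum_update_of_notMem hm, if_neg hm, Nat.add_zero]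

lemma inS_update (y : Wd q ℓ → ℕ) (e₀ : Wd q ℓ) (h1 : 1 ≤ y e₀) (v : Wd q (ℓ-1)) :
    inS (Function.update y e₀ (y e₀ - 1)) v + (if dbDst e₀ = v then 1 else 0) = inS y v := by
  have h := sum_update_sub y e₀ h1 (inEdges q ℓ v)
  simp only [inEdges, Finset.mem_filter, Finset.mem_univ, true_and] at h
  simpa [inS, inEdges] using h

lemma outS_update (y : Wd q ℓ → ℕ) (e₀ : Wd q ℓ) (h1 : 1 ≤ y e₀) (v : Wd q (ℓ-1)) :
    outS (Function.update y e₀ (y e₀ - 1)) v + (if dbSrc e₀ = v then 1 else 0) = outS y v := by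
  have h := sum_update_sub y e₀ h1 (outEdges q ℓ v)
  simp only [outEdges, Finset.mem_filter, Finset.mem_univ, true_and] at h
  simpa [outS, outEdges] using h

lemma exists_out_edge {y : Wd q ℓ → ℕ} {c : Wd q (ℓ-1)} (h : 0 < outS y c) :
    ∃ e, dbSrc e = c ∧ 0 < y e := by
  by_contra hc
  push_neg at hc
  have : outS y c = 0 := Finset.sum_eq_zero (by
    intro e he
    simp only [outEdges, Finset.mem_filter] at he
    have := hc e he.2
    omega)
  omega

lemma walkLemma : ∀ (n : ℕ) (y : Wd q ℓ → ℕ), (∑ e, y e) = n → ∀ c a : Wd q (ℓ-1), c ≠ a →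
    (∀ u, u ≠ c → u ≠ a → inS y u = outS y u) →
    outS y c = inS y c + 1 → inS y a = outS y a + 1 →
    ∃ P : List (Wd q ℓ), P ≠ [] ∧ P.Chain' dstep ∧ (∀ e ∈ P.head?, dbSrc e = c) ∧
      (∀ e ∈ P.getLast?, dbDst e = a) ∧ ∀ e, P.count e ≤ y e := by
  intro n
  induction n using Nat.strong_induction_on with
  | _ n ih =>
  intro y hsum c a hca hbal hc ha
  obtain ⟨e₀, hsrc, hpos⟩ : ∃ e, dbSrc e = c ∧ 0 < y e := exists_out_edge (by omega)
  have hupd_in := fun v => inS_update y e₀ hpos v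
  have hupd_out := fun v => outS_update y e₀ hpos v
  set y' := Function.update y e₀ (y e₀ - 1) with hy'
  have hsum' : (∑ e, y' e) + 1 = n := by
    rw [← hsum, hy']
    have := sum_update_sub y e₀ hpos Finset.univ
    simpa using this
  by_cases hdst : dbDst e₀ = a
  · refine ⟨[e₀], by simp, by simp [List.Chain'], ?_, ?_, ?_⟩
    · intro e he; simp at he; subst he; exact hsrc
    · intro e he; simp at he; subst he; exact hdst
    · intro e
      rcases eq_or_ne e e₀ with rfl | hne
      · simpa using Nat.succ_le_of_lt hpos
      · simp [List.count_singleton', hne.symm]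
  · -- recurse from c' := dbDst e₀
    set c' := dbDst e₀ with hc'
    have hinv1 : ∀ u, u ≠ c' → u ≠ a → inS y' u = outS y' u := by
      intro u h1 h2
      have e1 := hupd_in u; have e2 := hupd_out u
      by_cases g1 : dbDst e₀ = u
      · exact absurd (g1.symm) (by simpa [hc'] using h1)
      · rw [if_neg g1] at e1
        by_cases g2 : dbSrc e₀ = u
        · -- u = c
          have hu : u = c := by rw [← g2, hsrc]
          rw [if_pos g2] at e2
          subst hu
          omega
        · rw [if_neg g2] at e2
          have hune : u ≠ c := fun h => g2 (by rw [h, hsrc])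
          have := hbal u hune h2
          omega
    have hc'2 : outS y' c' = inS y' c' + 1 := by
      have e1 := hupd_in c'; have e2 := hupd_out c'
      rw [if_pos rfl] at e1
      by_cases g2 : dbSrc e₀ = c'
      · -- c' = c (self-loop-ish step)
        rw [if_pos g2] at e2
        have : c' = c := by rw [← g2, hsrc]
        subst this
        omega
      · rw [if_neg g2] at e2
        have hne : c' ≠ c := fun h => g2 (by rw [h, hsrc])
        have := hbal c' hne hdst
        omega
    have ha2 : inS y' a = outS y' a + 1 := by
      have e1 := hupd_in a; have e2 := hupd_out a
      rw [if_neg hdst] at e1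
      rw [if_neg (by rw [hsrc]; exact hca)] at e2
      omega
    obtain ⟨P, hPne, hPch, hPh, hPl, hPcnt⟩ :=
      ih (n-1) (by omega) y' (by omega) c' a hdst hinv1 hc'2 ha2
    refine ⟨e₀ :: P, by simp, ?_, ?_, ?_, ?_⟩
    · rw [List.Chain', List.isChain_cons]
      exact ⟨fun b hb => by rw [dstep, ← hc']; exact (hPh b hb).symm, hPch⟩
    · intro e he; simp at he; subst he; exact hsrc
    · intro e he
      obtain ⟨b, t, rfl⟩ := List.exists_cons_of_ne_nil hPne
      rw [List.getLast?_cons_cons] at he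
      exact hPl e he
    · intro e
      have := hPcnt e
      rcases eq_or_ne e e₀ with rfl | hne
      · rw [hy'] at this
        simp only [Function.update_self] at this
        simp [List.count_cons]
        omega
      · rw [hy'] at this
        simp only [Function.update_of_ne hne] at this
        simp [List.count_cons, hne, Ne.symm hne]
        omega

lemma extractCircuit {y : Wd q ℓ → ℕ} (hbal : ∀ u, inS y u = outS y u)
    {a : Wd q (ℓ-1)} {e₀ : Wd q ℓ} (hsrc : dbSrc e₀ = a) (hpos : 0 < y e₀) :
    ∃ W : List (Wd q ℓ), CircAt a W ∧ W ≠ [] ∧ ∀ e, W.count e ≤ y e := by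
  by_cases hdst : dbDst e₀ = a
  · refine ⟨[e₀], ⟨by simp [List.Chain'], ?_, ?_⟩, by simp, ?_⟩
    · intro e he; simp at he; subst he; exact hsrc
    · intro e he; simp at he; subst he; exact hdst
    · intro e
      rcases eq_or_ne e e₀ with rfl | hne
      · simpa using Nat.succ_le_of_lt hpos
      · simp [List.count_singleton', hne.symm]
  · have hupd_in := fun v => inS_update y e₀ hpos v
    have hupd_out := fun v => outS_update y e₀ hpos v
    set y' := Function.update y e₀ (y e₀ - 1) with hy'
    set c' := dbDst e₀ with hc'
    have hinv1 : ∀ u, u ≠ c' → u ≠ a → inS y' u = outS y' u := by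
      intro u h1 h2
      have e1 := hupd_in u; have e2 := hupd_out u
      rw [if_neg (by simpa [hc'] using (Ne.symm h1))] at e1
      rw [if_neg (by rw [hsrc]; exact Ne.symm h2)] at e2
      have := hbal u
      omega
    have hc'2 : outS y' c' = inS y' c' + 1 := by
      have e1 := hupd_in c'; have e2 := hupd_out c'
      rw [if_pos rfl] at e1
      rw [if_neg (by rw [hsrc]; exact fun h => hdst (by rw [hc', h]))] at e2
      have := hbal c'
      omega
    have ha2 : inS y' a = outS y' a + 1 := by
      have e1 := hupd_in a; have e2 := hupd_out a
      rw [if_neg hdst] at e1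
      rw [if_pos hsrc] at e2
      have := hbal a
      omega
    obtain ⟨P, hPne, hPch, hPh, hPl, hPcnt⟩ :=
      walkLemma (∑ e, y' e) y' rfl c' a hdst hinv1 hc'2 ha2
    refine ⟨e₀ :: P, ⟨?_, ?_, ?_⟩, by simp, ?_⟩
    · rw [List.Chain', List.isChain_cons]
      exact ⟨fun b hb => by rw [dstep, ← hc']; exact (hPh b hb).symm, hPch⟩
    · intro e he; simp at he; subst he; exact hsrc
    · intro e he
      obtain ⟨b, t, rfl⟩ := List.exists_cons_of_ne_nil hPne
      rw [List.getLast?_cons_cons] at he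
      exact hPl e he
    · intro e
      have := hPcnt e
      rcases eq_or_ne e e₀ with rfl | hne
      · rw [hy'] at this
        simp only [Function.update_self] at this
        simp [List.count_cons]
        omega
      · rw [hy'] at this
        simp only [Function.update_of_ne hne] at this
        simp [List.count_cons, hne, Ne.symm hne]
        omega

end Stmt18
namespace Stmt18

variable {q ℓ : ℕ}

lemma claimC : ∀ (n : ℕ) (y : Wd q ℓ → ℕ), (∑ e, y e) = n →
    (∀ u, inS y u = outS y u) →
    ∀ (a : Wd q (ℓ-1)) (L : List (Wd q ℓ)), CircAt a L → L ≠ [] →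
    (∀ e, 0 < y e → ∃ f ∈ L, dbSrc f = dbSrc e) →
    ∃ (b : Wd q (ℓ-1)) (R : List (Wd q ℓ)), CircAt b R ∧ R ≠ [] ∧
      ∀ e, R.count e = L.count e + y e := by
  intro n
  induction n using Nat.strong_induction_on with
  | _ n ih =>
  intro y hsum hbal a L hL hLne hvis
  rcases Nat.eq_zero_or_pos n with rfl | hn
  · refine ⟨a, L, hL, hLne, fun e => ?_⟩
    have : y e = 0 := by
      have := Finset.sum_eq_zero_iff.1 hsum e (Finset.mem_univ e)
      exact this
    omega
  · obtain ⟨e₀, hy0⟩ : ∃ e, 0 < y e := by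
      by_contra hcon
      push_neg at hcon
      have : (∑ e, y e) = 0 := Finset.sum_eq_zero (fun e _ => by have := hcon e; omega)
      omega
    obtain ⟨f, hfL, hfsrc⟩ := hvis e₀ hy0
    -- rotate L to start at vertex aa := dbSrc e₀
    have hidx : CircIdx L := circIdx_of_circAt hL hLne
    obtain ⟨k, hk⟩ := List.mem_iff_get.1 hfL
    have hpos : 0 < L.length := List.length_pos_iff.2 hLne
    set R₀ := L.rotate k.1 with hR₀
    have hR₀idx : CircIdx R₀ := circIdx_rotate hidx k.1
    have hR₀len : 0 < R₀.length := by
      rw [hR₀, List.length_rotate]; exact hpos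
    have hR₀perm : List.Perm R₀ L := List.rotate_perm L k.1
    have hget0 : R₀.get ⟨0, hR₀len⟩ = f := by
      have h' : (L.rotate k.1).get ⟨0, by simpa using hpos⟩ = f := by
        simp only [List.get_eq_getElem, List.getElem_rotate]
        rw [← hk]
        simp only [List.get_eq_getElem]
        congr 1
        rw [Nat.zero_add, Nat.mod_eq_of_lt k.isLt]
      exact h'
    have hR₀circ : CircAt (dbSrc e₀) R₀ := by
      have := circAt_of_circIdx hR₀idx hR₀len
      rwa [hget0, hfsrc] at this
    obtain ⟨W, hWc, hWne, hWcnt⟩ := extractCircuit hbal (rfl : dbSrc e₀ = dbSrc e₀) hy0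
    set y' := fun e => y e - W.count e with hy'
    have hptw : ∀ e, y' e + W.count e = y e := fun e => Nat.sub_add_cancel (hWcnt e)
    have hWidx : CircIdx W := circIdx_of_circAt hWc hWne
    have hWbal := circ_balanced hWidx
    have hy'bal : ∀ u, inS y' u = outS y' u := by
      intro u
      have h1 : inS y' u + ∑ e ∈ inEdges q ℓ u, W.count e = inS y u := by
        rw [inS, inS, ← Finset.sum_add_distrib]
        exact Finset.sum_congr rfl fun e _ => hptw e
      have h2 : outS y' u + ∑ e ∈ outEdges q ℓ u, W.count e = outS y u := by
        rw [outS, outS, ← Finset.sum_add_distrib]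
        exact Finset.sum_congr rfl fun e _ => hptw e
      have h3 := hWbal u
      have h4 := hbal u
      omega
    have hWlen : 1 ≤ W.length := List.length_pos_iff.2 hWne
    have hsum' : (∑ e, y' e) + W.length = n := by
      rw [← hsum, ← sum_count_univ W, ← Finset.sum_add_distrib]
      exact Finset.sum_congr rfl fun e _ => hptw e
    set L' := W ++ R₀ with hL'
    have hL'c : CircAt (dbSrc e₀) L' := circAt_append hWc hR₀circ
    have hL'ne : L' ≠ [] := by
      rw [hL']
      simp [hWne]
    have hvis' : ∀ e, 0 < y' e → ∃ g ∈ L', dbSrc g = dbSrc e := by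
      intro e he
      have : 0 < y e := by have := hptw e; omega
      obtain ⟨g, hgL, hgs⟩ := hvis e this
      exact ⟨g, by rw [hL']; exact List.mem_append_right _ (hR₀perm.mem_iff.2 hgL), hgs⟩
    obtain ⟨b, R, hRc, hRne, hRcnt⟩ :=
      ih (∑ e, y' e) (by omega) y' rfl hy'bal (dbSrc e₀) L' hL'c hL'ne hvis'
    refine ⟨b, R, hRc, hRne, fun e => ?_⟩
    have h5 := hRcnt e
    have h6 : L'.count e = W.count e + R₀.count e := by
      rw [hL', List.count_append]
    have h7 : R₀.count e = L.count e := hR₀perm.count_eq e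
    have h8 := hptw e
    omega

def fB {q ℓ : ℕ} (hq : 0 < q) (u : Wd q (ℓ-1)) (k : ℕ) : Fin q :=
  if h : k < ℓ-1 then ⟨0, hq⟩
  else if h2 : k - (ℓ-1) < ℓ-1 then u ⟨k - (ℓ-1), h2⟩ else ⟨0, hq⟩

def blk {q ℓ : ℕ} (hq : 0 < q) (u : Wd q (ℓ-1)) : List (Wd q ℓ) :=
  (List.range (2*(ℓ-1))).map (fun i => fun j : Fin ℓ => fB hq u (i + j.1))

lemma blk_length {hq : 0 < q} (u : Wd q (ℓ-1)) : (blk (ℓ := ℓ) hq u).length = 2*(ℓ-1) := by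
  simp [blk]

lemma blk_get {hq : 0 < q} (u : Wd q (ℓ-1)) (i : ℕ) (hi : i < (blk (ℓ := ℓ) hq u).length) :
    (blk hq u).get ⟨i, hi⟩ = fun j : Fin ℓ => fB hq u (i + j.1) := by
  simp [blk]

/-- the explicit spanning closed walk -/
lemma spanning_walk (hq : 0 < q) (hℓ : 2 ≤ ℓ) :
    ∃ (W₀ : List (Wd q ℓ)) (z : Wd q (ℓ-1)), CircAt z W₀ ∧ W₀ ≠ [] ∧
      ∀ u : Wd q (ℓ-1), ∃ f ∈ W₀, dbSrc f = u := by
  have h1 : 1 ≤ ℓ - 1 := by omega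
  have hcirc : ∀ u, CircAt (fun _ => (⟨0, hq⟩ : Fin q)) (blk (ℓ := ℓ) hq u) := by
    intro u
    refine ⟨?_, ?_, ?_⟩
    · rw [List.Chain', List.isChain_iff_getElem]
      intro i hi
      show dstep ((blk hq u).get ⟨i, by omega⟩) ((blk hq u).get ⟨i+1, hi⟩)
      rw [blk_get, blk_get, dstep]
      funext j
      simp only [dbDst, dbSrc]
      exact congrArg (fB hq u) (by omega)
    · intro e he
      rw [head?_eq_get _ (by rw [blk_length]; omega), blk_get] at he
      simp only [Option.mem_some_iff] at he
      subst he
      funext j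
      have hj := j.isLt
      simp only [dbSrc, fB, Nat.zero_add]
      rw [dif_pos (by omega : (j.1 : ℕ) < ℓ-1)]
    · intro e he
      rw [getLast?_eq_get _ (by rw [blk_length]; omega), blk_get] at he
      simp only [Option.mem_some_iff] at he
      subst he
      funext j
      have hj := j.isLt
      simp only [dbDst, fB, blk_length]
      rw [dif_neg (by omega), dif_neg (by omega)]
  have hvisit : ∀ u, ∃ f ∈ blk (ℓ := ℓ) hq u, dbSrc f = u := by
    intro u
    refine ⟨(blk hq u).get ⟨ℓ-1, by rw [blk_length]; omega⟩, List.get_mem _ _, ?_⟩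
    rw [blk_get]
    funext j
    have hj := j.isLt
    simp only [dbSrc, fB]
    rw [dif_neg (by omega), dif_pos (by omega)]
    exact congrArg u (Fin.ext (by simp only [Fin.val_mk]; omega))
  have hcat : ∀ l : List (Wd q (ℓ-1)),
      CircAt (fun _ => (⟨0, hq⟩ : Fin q)) (l.flatMap (blk hq)) := by
    intro l
    induction l with
    | nil => exact ⟨List.isChain_nil, by simp, by simp⟩
    | cons uu t iht => exact circAt_append (hcirc uu) iht
  refine ⟨(Finset.univ.toList (α := Wd q (ℓ-1))).flatMap (blk hq),
    (fun _ => (⟨0, hq⟩ : Fin q)), hcat _, ?_, ?_⟩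
  · obtain ⟨f, hf, _⟩ := hvisit (fun _ => (⟨0, hq⟩ : Fin q))
    have : f ∈ (Finset.univ.toList (α := Wd q (ℓ-1))).flatMap (blk hq) :=
      List.mem_flatMap.2 ⟨_, by rw [Finset.mem_toList]; exact Finset.mem_univ _, hf⟩
    exact List.ne_nil_of_mem this
  · intro u
    obtain ⟨f, hf, hsrc⟩ := hvisit u
    exact ⟨f, List.mem_flatMap.2 ⟨u, by rw [Finset.mem_toList]; exact Finset.mem_univ u, hf⟩, hsrc⟩

end Stmt18
namespace Stmt18

variable {q ℓ : ℕ}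

def cIn (r : Wd q ℓ → ℕ) (t : Wd q ℓ) (u : Wd q (ℓ-1)) : ℕ :=
  ((inEdges q ℓ u).filter (fun e => r t ≤ r e)).card

def cOut (r : Wd q ℓ → ℕ) (t : Wd q ℓ) (u : Wd q (ℓ-1)) : ℕ :=
  ((outEdges q ℓ u).filter (fun e => r t ≤ r e)).card

def del (wt : Wd q ℓ → ℕ) (u : Wd q (ℓ-1)) : ℤ := (outS wt u : ℤ) - (inS wt u : ℤ)

lemma sum_op (r : Wd q ℓ → ℕ) (wt : Wd q ℓ → ℕ) (a c : ℕ) (t : Wd q ℓ)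
    (s : Finset (Wd q ℓ)) :
    ∑ e ∈ s, (a * wt e + if r t ≤ r e then c else 0)
      = a * (∑ e ∈ s, wt e) + (s.filter (fun e => r t ≤ r e)).card * c := by
  rw [Finset.sum_add_distrib, Finset.mul_sum]
  congr 1
  rw [← Finset.sum_filter, Finset.sum_const, smul_eq_mul]

lemma del_op (r : Wd q ℓ → ℕ) (wt : Wd q ℓ → ℕ) (a c : ℕ) (t : Wd q ℓ) (u : Wd q (ℓ-1)) :
    del (fun e => a * wt e + if r t ≤ r e then c else 0) u
      = a * del wt u + c * ((cOut r t u : ℤ) - (cIn r t u : ℤ)) := by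
  rw [del, del, inS, outS, inS, outS, sum_op, sum_op]
  rw [cIn, cOut]
  push_cast
  ring

lemma adjustStep (r : Wd q ℓ → ℕ) (wt : Wd q ℓ → ℕ)
    (hpos : ∀ e, 1 ≤ wt e) (hmono : ∀ e e', r e < r e' → wt e < wt e')
    (Pv : Wd q (ℓ-1) → Prop) (hdel : ∀ u, Pv u → del wt u = 0)
    (vi : Wd q (ℓ-1)) (tu td : Wd q ℓ)
    (hu : cIn r tu vi < cOut r tu vi) (hd : cOut r td vi < cIn r td vi)
    (hstab : ∀ u, Pv u → cIn r tu u = cOut r tu u ∧ cIn r td u = cOut r td u) :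
    ∃ wt', (∀ e, 1 ≤ wt' e) ∧ (∀ e e', r e < r e' → wt' e < wt' e') ∧
      (∀ u, Pv u → del wt' u = 0) ∧ del wt' vi = 0 := by
  rcases lt_trichotomy (del wt vi) 0 with hD | hD | hD
  · -- in-heavy : push up the out side using tu
    set g : ℕ := cOut r tu vi - cIn r tu vi with hg
    set c : ℕ := (-(del wt vi)).toNat with hc
    refine ⟨fun e => g * wt e + if r tu ≤ r e then c else 0, ?_, ?_, ?_, ?_⟩
    · intro e
      show 1 ≤ g * wt e + if r tu ≤ r e then c else 0
      have h7 : 0 < g * wt e := Nat.mul_pos (by omega) (hpos e)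
      omega
    · intro e e' h
      show (g * wt e + if r tu ≤ r e then c else 0)
        < (g * wt e' + if r tu ≤ r e' then c else 0)
      have h1 : g * wt e < g * wt e' :=
        (Nat.mul_lt_mul_left (by omega : 0 < g)).2 (hmono e e' h)
      have h2 : (if r tu ≤ r e then c else 0) ≤ (if r tu ≤ r e' then c else 0) := by
        by_cases hte : r tu ≤ r e
        · rw [if_pos hte, if_pos (by omega)]
        · simp [hte]
      omega
    · intro u hP
      rw [del_op]
      have h3 := (hstab u hP).1
      have h4 := hdel u hP
      rw [h4, h3]
      ring
    · rw [del_op]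
      have h5 : ((cOut r tu vi : ℤ) - (cIn r tu vi : ℤ)) = (g : ℤ) := by
        rw [hg]; push_cast [Nat.cast_sub (le_of_lt hu)]; ring
      have h6 : (c : ℤ) = -(del wt vi) := by
        rw [hc, Int.toNat_of_nonneg (by omega)]
      rw [h5, h6]
      ring
  · exact ⟨wt, hpos, hmono, hdel, hD⟩
  · -- out-heavy : push up the in side using td
    set g : ℕ := cIn r td vi - cOut r td vi with hg
    set c : ℕ := (del wt vi).toNat with hc
    refine ⟨fun e => g * wt e + if r td ≤ r e then c else 0, ?_, ?_, ?_, ?_⟩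
    · intro e
      show 1 ≤ g * wt e + if r td ≤ r e then c else 0
      have h7 : 0 < g * wt e := Nat.mul_pos (by omega) (hpos e)
      omega
    · intro e e' h
      show (g * wt e + if r td ≤ r e then c else 0)
        < (g * wt e' + if r td ≤ r e' then c else 0)
      have h1 : g * wt e < g * wt e' :=
        (Nat.mul_lt_mul_left (by omega : 0 < g)).2 (hmono e e' h)
      have h2 : (if r td ≤ r e then c else 0) ≤ (if r td ≤ r e' then c else 0) := by
        by_cases hte : r td ≤ r e
        · rw [if_pos hte, if_pos (by omega)]
        · simp [hte]
      omega
    · intro u hP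
      rw [del_op]
      have h3 := (hstab u hP).2
      have h4 := hdel u hP
      rw [h4, h3]
      ring
    · rw [del_op]
      have h5 : ((cOut r td vi : ℤ) - (cIn r td vi : ℤ)) = -(g : ℤ) := by
        rw [hg]; push_cast [Nat.cast_sub (le_of_lt hd)]; ring
      have h6 : (c : ℤ) = del wt vi := by
        rw [hc, Int.toNat_of_nonneg (by omega)]
      rw [h5, h6]
      ring

lemma total_del (wt : Wd q ℓ → ℕ) : ∑ u : Wd q (ℓ-1), del wt u = 0 := by
  have h1 : ∑ u : Wd q (ℓ-1), outS wt u = ∑ e : Wd q ℓ, wt e := by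
    simp only [outS, outEdges]
    exact Finset.sum_fiberwise Finset.univ dbSrc wt
  have h2 : ∑ u : Wd q (ℓ-1), inS wt u = ∑ e : Wd q ℓ, wt e := by
    simp only [inS, inEdges]
    exact Finset.sum_fiberwise Finset.univ dbDst wt
  simp only [del]
  rw [Finset.sum_sub_distrib, ← Nat.cast_sum, ← Nat.cast_sum, h1, h2]
  ring

lemma adjust (r : Wd q ℓ → ℕ)
    (v : Fin (q^(ℓ-1)) → Wd q (ℓ-1)) (hv : Function.Bijective v)
    (hc : ∀ i : ℕ, (hi : i+1 < q^(ℓ-1)) → ∃ tu td : Wd q ℓ,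
        cIn r tu (v ⟨i, by omega⟩) < cOut r tu (v ⟨i, by omega⟩) ∧
        cOut r td (v ⟨i, by omega⟩) < cIn r td (v ⟨i, by omega⟩) ∧
        ∀ j : ℕ, (hj : j < i) → (cIn r tu (v ⟨j, by omega⟩) = cOut r tu (v ⟨j, by omega⟩) ∧
          cIn r td (v ⟨j, by omega⟩) = cOut r td (v ⟨j, by omega⟩)))
    (wt₀ : Wd q ℓ → ℕ) (hpos₀ : ∀ e, 1 ≤ wt₀ e)
    (hmono₀ : ∀ e e', r e < r e' → wt₀ e < wt₀ e')
    (hN : 1 ≤ q^(ℓ-1)) :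
    ∃ wt : Wd q ℓ → ℕ, (∀ e, 1 ≤ wt e) ∧ (∀ e e', r e < r e' → wt e < wt e') ∧
      ∀ u, inS wt u = outS wt u := by
  have main : ∀ i, i ≤ (q^(ℓ-1)) - 1 → ∃ wt : Wd q ℓ → ℕ,
      (∀ e, 1 ≤ wt e) ∧ (∀ e e', r e < r e' → wt e < wt e') ∧
      ∀ j : ℕ, (hj : j < q^(ℓ-1)) → j < i → del wt (v ⟨j, hj⟩) = 0 := by
    intro i
    induction i with
    | zero => exact fun _ => ⟨wt₀, hpos₀, hmono₀, fun j hj h => absurd h (by omega)⟩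
    | succ i ih =>
      intro hi1
      obtain ⟨wt, hpos, hmono, hdel⟩ := ih (by omega)
      have hiN : i + 1 < (q^(ℓ-1)) := by omega
      obtain ⟨tu, td, htu, htd, hstab⟩ := hc i hiN
      obtain ⟨wt', hpos', hmono', hdelP, hdelvi⟩ :=
        adjustStep r wt hpos hmono
          (fun u => ∃ (j : ℕ) (hj : j < q^(ℓ-1)), j < i ∧ v ⟨j, hj⟩ = u)
          (by rintro u ⟨j, hj, hji, rfl⟩; exact hdel j hj hji)
          (v ⟨i, by omega⟩) tu td htu htd
          (by rintro u ⟨j, hj, hji, rfl⟩; exact hstab j hji)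
      refine ⟨wt', hpos', hmono', ?_⟩
      intro j hj hji
      rcases Nat.lt_or_ge j i with h | h
      · exact hdelP _ ⟨j, hj, h, rfl⟩
      · have : j = i := by omega
        subst this
        exact hdelvi
  obtain ⟨wt, hpos, hmono, hdel⟩ := main (q^(ℓ-1)-1) (le_refl _)
  refine ⟨wt, hpos, hmono, ?_⟩
  have hlast : del wt (v ⟨q^(ℓ-1)-1, by omega⟩) = 0 := by
    have htot : ∑ j : Fin (q^(ℓ-1)), del wt (v j) = 0 := by
      rw [Fintype.sum_bijective v hv _ (fun u => del wt u) (fun j => rfl)]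
      exact total_del wt
    have hz : ∀ j ∈ Finset.univ, j ≠ (⟨q^(ℓ-1)-1, by omega⟩ : Fin (q^(ℓ-1))) →  del wt (v j) = 0 := by
      intro j _ hne
      have : j.1 < (q^(ℓ-1)) - 1 := by
        rcases Nat.lt_or_ge j.1 (q^(ℓ-1)-1) with h | h
        · exact h
        · exact absurd (Fin.ext (by omega : j.1 = q^(ℓ-1)-1)) hne
      exact hdel j.1 j.isLt this
    rw [Finset.sum_eq_single_of_mem (⟨q^(ℓ-1)-1, by omega⟩ : Fin (q^(ℓ-1))) (Finset.mem_univ _) hz] at htot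
    exact htot
  intro u
  obtain ⟨j, rfl⟩ := hv.2 u
  have : del wt (v j) = 0 := by
    rcases Nat.lt_or_ge j.1 (q^(ℓ-1)-1) with h | h
    · exact hdel j.1 j.isLt h
    · have hjl := j.isLt
      have hval : j.1 = q^(ℓ-1)-1 := by omega
      have : j = (⟨q^(ℓ-1)-1, by omega⟩ : Fin (q^(ℓ-1))) := Fin.ext hval
      rw [this]
      exact hlast
  rw [del] at this
  omega

end Stmt18

namespace Stmt18

variable {q ℓ : ℕ}

lemma geEdges_inter_in (r : Wd q ℓ → ℕ) (t : Wd q ℓ) (u : Wd q (ℓ-1)) :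
    geEdges (fun e => r e + 1) t ∩ inEdges q ℓ u
      = (inEdges q ℓ u).filter (fun e => r t ≤ r e) := by
  ext e
  simp only [Finset.mem_inter, Finset.mem_filter, geEdges, inEdges, Finset.mem_univ, true_and]
  constructor
  · rintro ⟨h1, h2⟩; exact ⟨h2, by omega⟩
  · rintro ⟨h1, h2⟩; exact ⟨by omega, h1⟩

lemma geEdges_inter_out (r : Wd q ℓ → ℕ) (t : Wd q ℓ) (u : Wd q (ℓ-1)) :
    geEdges (fun e => r e + 1) t ∩ outEdges q ℓ u
      = (outEdges q ℓ u).filter (fun e => r t ≤ r e) := by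
  ext e
  simp only [Finset.mem_inter, Finset.mem_filter, geEdges, outEdges, Finset.mem_univ, true_and]
  constructor
  · rintro ⟨h1, h2⟩; exact ⟨h2, by omega⟩
  · rintro ⟨h1, h2⟩; exact ⟨by omega, h1⟩

end Stmt18

/-- let `π` be a permutation of the edges of `G_{q,ℓ-1}` and give edge `e`
the weight `π(e) + 1`.  If the vertices can be enumerated `v_0, …, v_{q^{ℓ-1}-1}` so that
for each `i ≤ q^{ℓ-1}-2`: (1) `{v_i}` exhibits no Dyck configuration, and (2) `v_i` has a
step-up edge and a step-down edge that are both stable for every `v_j` with `j < i`, then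
`π` is feasible. -/
theorem stmt_18 (q ℓ : ℕ) (hq : 3 ≤ q) (hℓ : 2 ≤ ℓ)
    (π : Wd q ℓ ≃ Fin (Fintype.card (Wd q ℓ)))
    (v : Fin (q ^ (ℓ - 1)) → Wd q (ℓ - 1)) (hv : Function.Bijective v)
    (hcond : ∀ i : Fin (q ^ (ℓ - 1)), i.1 + 1 < q ^ (ℓ - 1) →
      (¬ ExhibitsDyck
          (Finset.univ.filter fun w : Wd q ℓ => dbDst w = v i ∧ dbSrc w ≠ v i)
          (Finset.univ.filter fun w : Wd q ℓ => dbSrc w = v i ∧ dbDst w ≠ v i)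
          (fun w => (π w : ℕ) + 1)) ∧
      ∃ eu ed : Wd q ℓ,
        IsStepUp (fun w => (π w : ℕ) + 1) eu (v i) ∧
        IsStepDown (fun w => (π w : ℕ) + 1) ed (v i) ∧
        ∀ j : Fin (q ^ (ℓ - 1)), j.1 < i.1 →
          IsStable (fun w => (π w : ℕ) + 1) eu (v j) ∧
          IsStable (fun w => (π w : ℕ) + 1) ed (v j)) :
    FeasiblePerm π := by
  classical
  open Stmt18 in
  have hq0 : 0 < q := by omega
  have hN : 1 ≤ q ^ (ℓ - 1) := Nat.one_le_iff_ne_zero.2 (by positivity)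
  set r : Wd q ℓ → ℕ := fun e => (π e : ℕ) with hr
  have hrinj : Function.Injective r := by
    intro w w' h
    exact π.injective (Fin.ext h)
  -- translate hcond
  have hc : ∀ i : ℕ, (hi : i+1 < q^(ℓ-1)) → ∃ tu td : Wd q ℓ,
      cIn r tu (v ⟨i, by omega⟩) < cOut r tu (v ⟨i, by omega⟩) ∧
      cOut r td (v ⟨i, by omega⟩) < cIn r td (v ⟨i, by omega⟩) ∧
      ∀ j : ℕ, (hj : j < i) → (cIn r tu (v ⟨j, by omega⟩) = cOut r tu (v ⟨j, by omega⟩) ∧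
        cIn r td (v ⟨j, by omega⟩) = cOut r td (v ⟨j, by omega⟩)) := by
    intro i hi
    obtain ⟨-, eu, ed, hsu, hsd, hst⟩ := hcond ⟨i, by omega⟩ hi
    refine ⟨eu, ed, ?_, ?_, ?_⟩
    · rw [IsStepUp, geEdges_inter_in r, geEdges_inter_out r] at hsu
      exact hsu
    · rw [IsStepDown, geEdges_inter_in r, geEdges_inter_out r] at hsd
      exact hsd
    · intro j hj
      have := hst ⟨j, by omega⟩ hj
      obtain ⟨h1, h2⟩ := this
      rw [IsStable, geEdges_inter_in r, geEdges_inter_out r] at h1 h2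
      exact ⟨h1, h2⟩
  obtain ⟨wt, hpos, hmono, hbal⟩ :=
    adjust r v hv hc (fun e => r e + 1) (fun e => by show 1 ≤ r e + 1; omega)
      (fun e e' h => by show r e + 1 < r e' + 1; omega) hN
  obtain ⟨W₀, z, hW₀c, hW₀ne, hW₀vis⟩ := spanning_walk hq0 hℓ
  set M := W₀.length with hM
  have hMpos : 0 < M := List.length_pos_iff.2 hW₀ne
  set x : Wd q ℓ → ℕ := fun e => M * wt e with hx
  have hxbal : ∀ u, inS x u = outS x u := by
    intro u
    simp only [inS, outS, hx]
    rw [← Finset.mul_sum, ← Finset.mul_sum]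
    have := hbal u
    simp only [inS, outS] at this
    rw [this]
  have hcnt_le : ∀ e, W₀.count e ≤ x e := by
    intro e
    calc W₀.count e ≤ M := List.count_le_length
    _ = M * 1 := (Nat.mul_one M).symm
    _ ≤ M * wt e := Nat.mul_le_mul_left M (hpos e)
  set y : Wd q ℓ → ℕ := fun e => x e - W₀.count e with hy
  have hptw : ∀ e, y e + W₀.count e = x e := fun e => Nat.sub_add_cancel (hcnt_le e)
  have hW₀idx : CircIdx W₀ := circIdx_of_circAt hW₀c hW₀ne
  have hW₀bal := circ_balanced hW₀idx
  have hybal : ∀ u, inS y u = outS y u := by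
    intro u
    have h1 : inS y u + ∑ e ∈ inEdges q ℓ u, W₀.count e = inS x u := by
      rw [inS, inS, ← Finset.sum_add_distrib]
      exact Finset.sum_congr rfl fun e _ => hptw e
    have h2 : outS y u + ∑ e ∈ outEdges q ℓ u, W₀.count e = outS x u := by
      rw [outS, outS, ← Finset.sum_add_distrib]
      exact Finset.sum_congr rfl fun e _ => hptw e
    have h3 := hW₀bal u
    have h4 := hxbal u
    omega
  obtain ⟨b, R, hRc, hRne, hRcnt⟩ :=
    claimC (∑ e, y e) y rfl hybal z W₀ hW₀c hW₀ne
      (fun e _ => by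
        obtain ⟨f, hf, hsrc⟩ := hW₀vis (dbSrc e)
        exact ⟨f, hf, hsrc⟩)
  have hRx : ∀ e, R.count e = x e := by
    intro e
    have := hRcnt e
    have := hptw e
    have hWx := hcnt_le e
    have : W₀.count e + y e = x e := by omega
    omega
  have hRidx : CircIdx R := circIdx_of_circAt hRc hRne
  have hRpos : 0 < R.length := List.length_pos_iff.2 hRne
  have hord : ∀ w w', r w < r w' → R.count w < R.count w' := by
    intro w w' h
    rw [hRx, hRx]
    exact (Nat.mul_lt_mul_left hMpos).2 (hmono _ _ h)
  refine ⟨fun w => R.count w, ⟨R.length, fun i => R.get i ⟨0, by omega⟩, fun w => ?_⟩, ?_, ?_⟩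
  · exact (gram_count hℓ R hRidx hRpos w).symm
  · intro w w' h
    change List.count w R = List.count w' R at h
    by_contra hne
    have hrne : r w ≠ r w' := fun hh => hne (hrinj hh)
    rcases Nat.lt_or_ge (r w) (r w') with hlt | hge
    · have := hord w w' hlt
      omega
    · have := hord w' w (by omega)
      omega
  · intro w w'
    rw [Fin.lt_def]
    constructor
    · intro h
      show List.count w R < List.count w' R
      exact hord w w' h
    · intro h
      change List.count w R < List.count w' R at h
      by_contra hnlt
      rcases Nat.lt_or_ge (r w) (r w') with hlt | hge
      · exact hnlt hlt
      · rcases Nat.eq_or_lt_of_le hge with heq | hlt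
        · have : w' = w := hrinj heq
          subst this
          omega
        · have := hord w' w hlt
          omega
end
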